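/- arXiv:1908.04043 — 3 statements merged into one kernel-verified Lean document; each statement's English description precedes it below -/
import Mathlib

section
/- For any positive integer n that is not a perfect square, there exists an odd prime p not dividing n such that the Legendre symbol (n/p) = -1, i.e., n is a quadratic non-residue modulo p. -/
/-!
If `n` is not a square, some prime `q` occurs in `n = q ^ k * r` to an odd power `k`, with
`q ∤ r`. By the Chinese remainder theorem there is an `m ≡ 1 [MOD 4 r]` with `J(q | m) = -1`;
then `J(r | m) = 1`, since `J(r | ·)` only depends on its argument modulo `4 r`, so
`J(n | m) = (-1) ^ k = -1`. Some prime factor `p` of `m` then has `(n / p) = -1`, and such a `p`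
is automatically odd and prime to `n`.
-/

open NumberTheorySymbols

theorem Nat.exists_prime_odd_factorization_of_not_isSquare {n : ℕ} (hn : ¬IsSquare n) :
    ∃ q, q.Prime ∧ Odd (n.factorization q) := by
  have hn0 : n ≠ 0 := by rintro rfl; exact hn IsSquare.zero
  contrapose! hn
  rw [← Nat.prod_factorization_pow_eq_self hn0]
  refine Finset.isSquare_prod _ fun q hq => Even.isSquare_pow ?_ q
  exact Nat.not_odd_iff_even.mp (hn q (Nat.prime_of_mem_primeFactors hq))

theorem jacobiSym.natCast_eq_one_of_modEq_one {r m : ℕ} (h : m ≡ 1 [MOD 4 * r]) :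
    J(r | m) = 1 := by
  have hm : Odd m := Nat.odd_iff.mpr (h.of_dvd (dvd_mul_of_dvd_left (by norm_num) r))
  rw [jacobiSym.mod_right' r hm, h, Nat.one_mod_eq_one.mpr (by omega), jacobiSym.one_right]

theorem jacobiSym.exists_modEq_one_two_eq_neg_one {r : ℕ} (hr : Odd r) :
    ∃ m, m ≡ 1 [MOD 4 * r] ∧ J(2 | m) = -1 := by
  have h2r : Nat.Coprime 2 r := Nat.coprime_two_left.mpr hr
  obtain ⟨m, hm8, hmr⟩ := Nat.chineseRemainder (h2r.pow_left 3) 5 1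
  have hm4 : m ≡ 1 [MOD 4] := (hm8.of_dvd (by norm_num)).trans (by decide)
  refine ⟨m, (Nat.modEq_and_modEq_iff_modEq_mul (h2r.pow_left 2)).mp ⟨hm4, hmr⟩, ?_⟩
  have hmodd : Odd m := Nat.odd_iff.mpr (hm4.of_dvd (by norm_num))
  rw [jacobiSym.at_two hmodd, ← ZMod.natCast_mod, show m % 8 = 5 from hm8]
  decide

theorem jacobiSym.exists_modEq_one_eq_neg_one_of_ne_two {q r : ℕ} [Fact q.Prime] (hq : q ≠ 2)
    (hqr : q.Coprime r) : ∃ m, m ≡ 1 [MOD 4 * r] ∧ J(q | m) = -1 := by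
  obtain ⟨u, hu⟩ := FiniteField.exists_nonsquare (F := ZMod q) (by rwa [ZMod.ringChar_zmod_n])
  have hq4 : q.Coprime 4 :=
    Nat.Coprime.pow_right 2 ((Nat.coprime_primes Fact.out Nat.prime_two).mpr hq)
  obtain ⟨m, hmq, hmr⟩ := Nat.chineseRemainder (hq4.mul_right hqr) u.val 1
  have hm4 : m % 4 = 1 := hmr.of_dvd (dvd_mul_right 4 r)
  refine ⟨m, hmr, ?_⟩
  have hmu : ((m : ℤ) : ZMod q) = u := by
    rw [Int.cast_natCast, (ZMod.natCast_eq_natCast_iff _ _ _).mpr hmq, ZMod.natCast_zmod_val]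
  rw [jacobiSym.quadratic_reciprocity_one_mod_four' ((Fact.out : q.Prime).odd_of_ne_two hq) hm4,
    ← legendreSym.to_jacobiSym, legendreSym.eq_neg_one_iff, hmu]
  exact hu

theorem jacobiSym.exists_modEq_one_eq_neg_one {q r : ℕ} (hq : q.Prime) (hqr : q.Coprime r) :
    ∃ m, m ≡ 1 [MOD 4 * r] ∧ J(q | m) = -1 := by
  rcases eq_or_ne q 2 with rfl | hq2
  · exact exists_modEq_one_two_eq_neg_one (Nat.coprime_two_left.mp hqr)
  · have := Fact.mk hq
    exact exists_modEq_one_eq_neg_one_of_ne_two hq2 hqr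

theorem jacobiSym.exists_eq_neg_one_of_not_isSquare {n : ℕ} (hn : ¬IsSquare n) :
    ∃ m, J(n | m) = -1 := by
  obtain ⟨q, hq, hk⟩ := Nat.exists_prime_odd_factorization_of_not_isSquare hn
  have hn0 : n ≠ 0 := by rintro rfl; exact hn IsSquare.zero
  obtain ⟨m, hmr, hqm⟩ := exists_modEq_one_eq_neg_one hq (Nat.coprime_ordCompl hq hn0)
  refine ⟨m, ?_⟩
  rw [← Nat.ordProj_mul_ordCompl_eq_self n q, Nat.cast_mul, Nat.cast_pow, jacobiSym.mul_left,
    jacobiSym.pow_left, hqm, natCast_eq_one_of_modEq_one hmr, hk.neg_one_pow, mul_one]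

theorem legendreSym.ne_two_of_eq_neg_one {p : ℕ} [Fact p.Prime] {a : ℤ}
    (h : legendreSym p a = -1) : p ≠ 2 := by
  rintro rfl
  exact (eq_neg_one_iff 2).mp h (FiniteField.isSquare_of_char_two (ZMod.ringChar_zmod_n 2) _)

theorem legendreSym.not_dvd_of_eq_neg_one {p : ℕ} [Fact p.Prime] {a : ℤ}
    (h : legendreSym p a = -1) : ¬(p : ℤ) ∣ a := by
  intro hpa
  rw [(eq_zero_iff p a).mpr ((ZMod.intCast_zmod_eq_zero_iff_dvd a p).mpr hpa)] at h
  norm_num at h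

theorem stmt_2_general (n : ℕ) (hns : ¬ IsSquare n) :
    ∃ p : ℕ, ∃ _ : Fact p.Prime, p ≠ 2 ∧ ¬ p ∣ n ∧ legendreSym p (n : ℤ) = -1 := by
  obtain ⟨m, hm⟩ := jacobiSym.exists_eq_neg_one_of_not_isSquare hns
  obtain ⟨p, hp, -, hpn⟩ := jacobiSym.eq_neg_one_at_prime_divisor_of_eq_neg_one hm
  have := Fact.mk hp
  rw [← jacobiSym.legendreSym.to_jacobiSym] at hpn
  refine ⟨p, this, legendreSym.ne_two_of_eq_neg_one hpn, fun hpn' => ?_, hpn⟩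
  exact legendreSym.not_dvd_of_eq_neg_one hpn (Int.natCast_dvd_natCast.mpr hpn')

theorem stmt_2 (n : ℕ) (hn : 0 < n) (hns : ¬ IsSquare n) :
    ∃ p : ℕ, ∃ _ : Fact p.Prime, p ≠ 2 ∧ ¬ p ∣ n ∧ legendreSym p (n : ℤ) = -1 :=
  stmt_2_general n hns
end

section
/- Let m and n be integers such that -m*n is a perfect square (the square of an integer). Then there exist integers a, x, y with m = -a*x^2 and n = a*y^2. -/
/-!
Write `m = g m'` and `-n = g k'` with `g` their gcd. Then `m' k'` is a square and `m'`, `k'` are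
coprime, so both are a square up to one common sign `e`, and `a = -g e` works.
-/

namespace Int

theorem exists_mul_sq_of_isCoprime_of_mul_eq_sq {a b c : ℤ} (hab : IsCoprime a b)
    (h : a * b = c ^ 2) : ∃ e u v : ℤ, a = e * u ^ 2 ∧ b = e * v ^ 2 := by
  obtain ⟨u, hu | hu⟩ := sq_of_isCoprime hab h <;>
  obtain ⟨v, hv | hv⟩ := sq_of_isCoprime hab.symm ((mul_comm b a).trans h) <;>
  subst hu hv
  · exact ⟨1, u, v, by ring, by ring⟩
  -- with opposite signs, `a * b = -(u * v) ^ 2` is a square only when it vanishes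
  · obtain rfl | rfl : u = 0 ∨ v = 0 :=
      mul_eq_zero.mp (pow_eq_zero_iff two_ne_zero |>.mp (by nlinarith [sq_nonneg (u * v)]))
    · exact ⟨-1, 0, v, by ring, by ring⟩
    · exact ⟨1, u, 0, by ring, by ring⟩
  · obtain rfl | rfl : u = 0 ∨ v = 0 :=
      mul_eq_zero.mp (pow_eq_zero_iff two_ne_zero |>.mp (by nlinarith [sq_nonneg (u * v)]))
    · exact ⟨1, 0, v, by ring, by ring⟩
    · exact ⟨-1, u, 0, by ring, by ring⟩
  · exact ⟨-1, u, v, by ring, by ring⟩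

theorem exists_mul_sq_of_mul_eq_sq {m k s : ℤ} (h : m * k = s ^ 2) :
    ∃ b x y : ℤ, m = b * x ^ 2 ∧ k = b * y ^ 2 := by
  obtain ⟨m', k', hm, hk, hunit⟩ := extract_gcd m k
  set g := GCDMonoid.gcd m k
  rcases eq_or_ne g 0 with hg | hg
  · exact ⟨0, 0, 0, by simp [hm, hg], by simp [hk, hg]⟩
  obtain ⟨t, rfl⟩ : g ∣ s :=
    (pow_dvd_pow_iff two_ne_zero).mp ⟨m' * k', by rw [← h, hm, hk]; ring⟩
  have ht : m' * k' = t ^ 2 :=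
    mul_left_cancel₀ (pow_ne_zero 2 hg) (by linear_combination h - k * hm - g * m' * hk)
  obtain ⟨e, u, v, rfl, rfl⟩ :=
    exists_mul_sq_of_isCoprime_of_mul_eq_sq ((gcd_isUnit_iff m' k').mp hunit) ht
  exact ⟨g * e, u, v, by rw [hm]; ring, by rw [hk]; ring⟩

end Int

theorem stmt_5 (m n : ℤ) (h : IsSquare (-(m * n))) :
    ∃ a x y : ℤ, m = -(a * x ^ 2) ∧ n = a * y ^ 2 := by
  obtain ⟨s, hs⟩ := h
  obtain ⟨b, x, y, hm, hn⟩ :=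
    Int.exists_mul_sq_of_mul_eq_sq (m := m) (k := -n) (s := s) (by rw [sq, ← hs]; ring)
  exact ⟨-b, x, y, by rw [hm]; ring, by linarith⟩
end

section
/- Let a > 0 and b < 0 be integers such that -a*b is not a perfect square. Then there exist positive integers c and d such that the quadratic form q(x1,x2,x3,x4) = a*x1^2 + x1*x3 + c*x3^2 + b*x2^2 + x2*x4 + d*x4^2 over the integers is anisotropic: q(v) = 0 implies v = 0. -/
/-!
Since `-ab` is not a square, some prime divides it to an odd power; the Chinese remainder theorem
and quadratic reciprocity then give an odd `k` with Jacobi symbol `J(-ab | k) = -1`, so `-ab` is a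
nonsquare modulo some odd prime `q` dividing `k`. Take `c, d > 0` with `4ac ≡ 4bd ≡ 1 + q (mod q²)`,
i.e. `4ac - 1 = q e₁` and `4bd - 1 = q e₂` with `e₁ ≡ e₂ ≡ 1 (mod q)`. Completing both squares,
`4ab · Q(x) = a X² + b Y² + q (a e₂ x₄² + b e₁ x₃²)` with `X = 2b x₂ + x₄`, `Y = 2a x₁ + x₃`, and
neither `a X² + b Y²` nor `a e₂ Z² + b e₁ W²` has a nontrivial zero modulo `q`. So every zero of
this form is divisible by `q`, and dividing by `q` gives another zero: by descent it is `0`.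
-/

theorem eq_zero_and_eq_zero_of_mul_sq_add_mul_sq_eq_zero {F : Type*} [Field F] {A B x y : F}
    (hAB : ¬IsSquare (-(A * B))) (h : A * x ^ 2 + B * y ^ 2 = 0) : x = 0 ∧ y = 0 := by
  have hA : A ≠ 0 := by rintro rfl; exact hAB ⟨0, by ring⟩
  have hy : y = 0 := by
    by_contra hy
    refine hAB ⟨A * x / y, ?_⟩
    rw [div_mul_div_comm, eq_div_iff (mul_ne_zero hy hy)]
    linear_combination (-A) * h
  subst hy
  exact ⟨by simpa [hA] using h, rfl⟩

theorem Int.dvd_and_dvd_of_dvd_mul_sq_add_mul_sq {q : ℕ} [Fact q.Prime] {A B x y : ℤ}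
    (hAB : ¬IsSquare ((-(A * B) : ℤ) : ZMod q)) (h : (q : ℤ) ∣ A * x ^ 2 + B * y ^ 2) :
    (q : ℤ) ∣ x ∧ (q : ℤ) ∣ y := by
  simp only [← ZMod.intCast_zmod_eq_zero_iff_dvd] at h ⊢
  push_cast at hAB h
  exact eq_zero_and_eq_zero_of_mul_sq_add_mul_sq_eq_zero hAB h

theorem Int.eq_zero_of_forall_pow_dvd {p x : ℤ} (hp : p.natAbs ≠ 1) (h : ∀ n : ℕ, p ^ n ∣ x) :
    x = 0 := by
  by_contra hx
  obtain ⟨n, hn⟩ := Int.finiteMultiplicity_iff.mpr ⟨hp, hx⟩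
  exact hn (h (n + 1))

section Descent

variable {q : ℕ} [Fact q.Prime] {A B E₁ E₂ : ℤ}

theorem exists_eq_prime_mul_of_descent_eq_zero (hAB : ¬IsSquare ((-(A * B) : ℤ) : ZMod q))
    (hE : ¬IsSquare ((-(E₁ * E₂) : ℤ) : ZMod q)) {X Y Z W : ℤ}
    (h : A * X ^ 2 + B * Y ^ 2 + q * (E₁ * Z ^ 2 + E₂ * W ^ 2) = 0) :
    ∃ X' Y' Z' W' : ℤ, X = q * X' ∧ Y = q * Y' ∧ Z = q * Z' ∧ W = q * W' ∧
      A * X' ^ 2 + B * Y' ^ 2 + q * (E₁ * Z' ^ 2 + E₂ * W' ^ 2) = 0 := by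
  have hq : (q : ℤ) ≠ 0 := by exact_mod_cast (Fact.out : q.Prime).ne_zero
  obtain ⟨⟨X', rfl⟩, ⟨Y', rfl⟩⟩ := Int.dvd_and_dvd_of_dvd_mul_sq_add_mul_sq (x := X) (y := Y) hAB
    ⟨-(E₁ * Z ^ 2 + E₂ * W ^ 2), by linarith⟩
  have h' : q * (A * X' ^ 2 + B * Y' ^ 2) + (E₁ * Z ^ 2 + E₂ * W ^ 2) = 0 :=
    (mul_eq_zero.mp (by linear_combination h)).resolve_left hq
  obtain ⟨⟨Z', rfl⟩, ⟨W', rfl⟩⟩ := Int.dvd_and_dvd_of_dvd_mul_sq_add_mul_sq (x := Z) (y := W) hE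
    ⟨-(A * X' ^ 2 + B * Y' ^ 2), by linarith⟩
  exact ⟨X', Y', Z', W', rfl, rfl, rfl, rfl,
    (mul_eq_zero.mp (by linear_combination h')).resolve_left hq⟩

theorem pow_dvd_of_descent_eq_zero (hAB : ¬IsSquare ((-(A * B) : ℤ) : ZMod q))
    (hE : ¬IsSquare ((-(E₁ * E₂) : ℤ) : ZMod q)) (n : ℕ) {X Y Z W : ℤ}
    (h : A * X ^ 2 + B * Y ^ 2 + q * (E₁ * Z ^ 2 + E₂ * W ^ 2) = 0) :
    (q : ℤ) ^ n ∣ X ∧ (q : ℤ) ^ n ∣ Y ∧ (q : ℤ) ^ n ∣ Z ∧ (q : ℤ) ^ n ∣ W := by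
  induction n generalizing X Y Z W with
  | zero => simp
  | succ n ih =>
    obtain ⟨X', Y', Z', W', rfl, rfl, rfl, rfl, h'⟩ :=
      exists_eq_prime_mul_of_descent_eq_zero hAB hE h
    obtain ⟨hX, hY, hZ, hW⟩ := ih h'
    simp only [pow_succ']
    exact ⟨mul_dvd_mul_left _ hX, mul_dvd_mul_left _ hY, mul_dvd_mul_left _ hZ,
      mul_dvd_mul_left _ hW⟩

theorem eq_zero_of_descent_eq_zero (hAB : ¬IsSquare ((-(A * B) : ℤ) : ZMod q))
    (hE : ¬IsSquare ((-(E₁ * E₂) : ℤ) : ZMod q)) {X Y Z W : ℤ}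
    (h : A * X ^ 2 + B * Y ^ 2 + q * (E₁ * Z ^ 2 + E₂ * W ^ 2) = 0) :
    X = 0 ∧ Y = 0 ∧ Z = 0 ∧ W = 0 := by
  have hq : (q : ℤ).natAbs ≠ 1 := by simpa using (Fact.out : q.Prime).ne_one
  have hdvd n := pow_dvd_of_descent_eq_zero hAB hE n h
  exact ⟨Int.eq_zero_of_forall_pow_dvd hq fun n ↦ (hdvd n).1,
    Int.eq_zero_of_forall_pow_dvd hq fun n ↦ (hdvd n).2.1,
    Int.eq_zero_of_forall_pow_dvd hq fun n ↦ (hdvd n).2.2.1,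
    Int.eq_zero_of_forall_pow_dvd hq fun n ↦ (hdvd n).2.2.2⟩

end Descent

theorem Nat.exists_prime_pow_odd_mul_of_not_isSquare {m : ℕ} (hm : ¬IsSquare m) :
    ∃ p j n : ℕ, p.Prime ∧ ¬p ∣ n ∧ m = p ^ (2 * j + 1) * n := by
  have hm0 : 0 < m := Nat.pos_of_ne_zero (by rintro rfl; exact hm ⟨0, rfl⟩)
  obtain ⟨m₀, t, -, ht, rfl, hsf⟩ := Nat.sq_mul_squarefree_of_pos hm0
  have hm₀ : m₀ ≠ 1 := by rintro rfl; exact hm ⟨t, by ring⟩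
  set p := m₀.minFac
  have hp : p.Prime := Nat.minFac_prime hm₀
  obtain ⟨n₀, hn₀⟩ := Nat.minFac_dvd m₀
  have hpn₀ : ¬p ∣ n₀ := fun ⟨k, hk⟩ ↦
    hp.one_lt.ne' (Nat.isUnit_iff.mp (hsf p ⟨k, by rw [hn₀, hk, mul_assoc]⟩))
  obtain ⟨j, T, hpT, rfl⟩ := Nat.exists_eq_pow_mul_and_not_dvd ht.ne' p hp.ne_one
  refine ⟨p, j, T ^ 2 * n₀, hp, ?_, by rw [hn₀]; ring⟩
  rw [hp.dvd_mul, not_or]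
  exact ⟨fun h ↦ hpT (hp.dvd_of_dvd_pow h), hpn₀⟩

theorem jacobiSym_pow_odd_mul_eq_neg_one {p n k j : ℕ} (hp : jacobiSym p k = -1)
    (hn : jacobiSym n k = 1) : jacobiSym ((p ^ (2 * j + 1) * n : ℕ) : ℤ) k = -1 := by
  push_cast
  rw [jacobiSym.mul_left, jacobiSym.pow_left, hp, hn, mul_one, pow_succ, pow_mul]
  norm_num

theorem exists_jacobiSym_two_eq_neg_one_of_odd {n : ℕ} (hn : Odd n) :
    ∃ k : ℕ, Odd k ∧ jacobiSym 2 k = -1 ∧ jacobiSym n k = 1 := by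
  have hcop : Nat.Coprime 8 n := (Nat.coprime_two_left.mpr hn).pow_left 3
  obtain ⟨k, hk8, hkn⟩ := Nat.chineseRemainder hcop 5 1
  have hk8 : k % 8 = 5 := hk8
  have hk : Odd k := Nat.odd_iff.mpr (by omega)
  refine ⟨k, hk, ?_, ?_⟩
  · rw [jacobiSym.at_two hk, ZMod.χ₈_nat_mod_eight, hk8]
    decide
  · rw [jacobiSym.quadratic_reciprocity_one_mod_four' hn (by omega),
      jacobiSym.mod_left' (b := n) (a₂ := 1) (by exact_mod_cast hkn), jacobiSym.one_left]

theorem exists_jacobiSym_prime_eq_neg_one {p n : ℕ} (hp : p.Prime) (hp2 : p ≠ 2) (hpn : ¬p ∣ n) :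
    ∃ k : ℕ, Odd k ∧ jacobiSym p k = -1 ∧ jacobiSym n k = 1 := by
  have := Fact.mk hp
  obtain ⟨v, hv⟩ := FiniteField.exists_nonsquare (F := ZMod p) (by rwa [ZMod.ringChar_zmod_n])
  have hcop : Nat.Coprime (4 * n) p := by
    refine Nat.Coprime.mul_left ?_ ((hp.coprime_iff_not_dvd.mpr hpn).symm)
    exact ((Nat.coprime_primes Nat.prime_two hp).mpr hp2.symm).pow_left 2
  obtain ⟨k, hkn, hkp⟩ := Nat.chineseRemainder hcop 1 v.val
  have hk4 : k % 4 = 1 := hkn.of_dvd (dvd_mul_right 4 n)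
  have hk : Odd k := Nat.odd_iff.mpr (by omega)
  refine ⟨k, hk, ?_, ?_⟩
  · rw [jacobiSym.quadratic_reciprocity_one_mod_four' (hp.odd_of_ne_two hp2) hk4,
      jacobiSym.mod_left' (b := p) (a₂ := (v.val : ℕ)) (by exact_mod_cast hkp),
      ZMod.nonsquare_iff_jacobiSym_eq_neg_one]
    simpa using hv
  · have hn : n ≠ 0 := by rintro rfl; exact hpn (dvd_zero p)
    rw [jacobiSym.mod_right' n hk, hkn, Nat.one_mod_eq_one.mpr (by omega), jacobiSym.one_right]

theorem exists_jacobiSym_eq_neg_one_of_not_isSquare {m : ℕ} (hm : ¬IsSquare m) :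
    ∃ k : ℕ, Odd k ∧ jacobiSym m k = -1 := by
  obtain ⟨p, j, n, hp, hpn, rfl⟩ := Nat.exists_prime_pow_odd_mul_of_not_isSquare hm
  obtain ⟨k, hk, hpk, hnk⟩ : ∃ k : ℕ, Odd k ∧ jacobiSym p k = -1 ∧ jacobiSym n k = 1 := by
    rcases eq_or_ne p 2 with rfl | hp2
    · exact exists_jacobiSym_two_eq_neg_one_of_odd (Nat.odd_iff.mpr (by omega))
    · exact exists_jacobiSym_prime_eq_neg_one hp hp2 hpn
  exact ⟨k, hk, jacobiSym_pow_odd_mul_eq_neg_one hpk hnk⟩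

theorem Int.exists_prime_not_isSquare_intCast {m : ℤ} (hm₀ : 0 ≤ m) (hm : ¬IsSquare m) :
    ∃ q : ℕ, q.Prime ∧ q ≠ 2 ∧ ¬IsSquare (m : ZMod q) := by
  lift m to ℕ using hm₀
  obtain ⟨k, hk, hmk⟩ :=
    exists_jacobiSym_eq_neg_one_of_not_isSquare (Int.isSquare_natCast_iff.not.mp hm)
  obtain ⟨q, hq, hqk, hmq⟩ := jacobiSym.eq_neg_one_at_prime_divisor_of_eq_neg_one hmk
  refine ⟨q, hq, ?_, ZMod.nonsquare_of_jacobiSym_eq_neg_one hmq⟩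
  rintro rfl
  exact Nat.not_even_iff_odd.mpr hk (even_iff_two_dvd.mpr hqk)

theorem Int.exists_pos_mul_modEq {u n : ℤ} (hn : 0 < n) (hun : IsCoprime u n) (t : ℤ) :
    ∃ c : ℤ, 0 < c ∧ u * c ≡ t [ZMOD n] := by
  obtain ⟨x, y, hxy⟩ := hun
  refine ⟨x * t % n + n, by linarith [Int.emod_nonneg (x * t) hn.ne'], ?_⟩
  calc u * (x * t % n + n) ≡ u * (x * t + 0) [ZMOD n] :=
        ((Int.mod_modEq _ n).add (Int.modEq_zero_iff_dvd.mpr dvd_rfl)).mul_left u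
    _ = t + n * (-(y * t)) := by linear_combination t * hxy
    _ ≡ t [ZMOD n] := Int.modEq_add_fac_self

theorem Int.not_dvd_of_not_isSquare_neg_mul {q : ℕ} {A B : ℤ}
    (h : ¬IsSquare ((-(A * B) : ℤ) : ZMod q)) : ¬(q : ℤ) ∣ A ∧ ¬(q : ℤ) ∣ B := by
  simp only [← ZMod.intCast_zmod_eq_zero_iff_dvd]
  constructor <;> intro h0 <;> exact h ⟨0, by push_cast; simp [h0]⟩

theorem Int.isCoprime_four_mul_prime_sq {q : ℕ} (hq : q.Prime) (hq2 : q ≠ 2) {A : ℤ}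
    (hA : ¬(q : ℤ) ∣ A) : IsCoprime (4 * A) ((q : ℤ) ^ 2) := by
  have hq' : Prime (q : ℤ) := Nat.prime_iff_prime_int.mp hq
  refine (IsCoprime.symm ((hq'.coprime_iff_not_dvd).mpr ?_)).pow_right
  rw [hq'.dvd_mul, not_or]
  refine ⟨fun h4 ↦ hq2 ?_, hA⟩
  have h2 : (q : ℤ) ∣ 2 := hq'.dvd_of_dvd_pow (n := 2) (by norm_num [h4])
  have := Int.le_of_dvd two_pos h2
  have := hq.two_le
  omega

theorem stmt_12 (a b : ℤ) (ha : 0 < a) (hb : b < 0)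
    (hsq : ¬ IsSquare (-(a * b))) :
    ∃ c d : ℤ, 0 < c ∧ 0 < d ∧
      ∀ x1 x2 x3 x4 : ℤ,
        a * x1 ^ 2 + x1 * x3 + c * x3 ^ 2 + b * x2 ^ 2 + x2 * x4 + d * x4 ^ 2 = 0 →
        x1 = 0 ∧ x2 = 0 ∧ x3 = 0 ∧ x4 = 0 := by
  obtain ⟨q, hq, hq2, hab⟩ := Int.exists_prime_not_isSquare_intCast (by nlinarith) hsq
  have := Fact.mk hq
  have hq0 : (0 : ℤ) < (q : ℤ) ^ 2 := by have := hq.pos; positivity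
  obtain ⟨hqa, hqb⟩ := Int.not_dvd_of_not_isSquare_neg_mul hab
  obtain ⟨c, hc, hcq⟩ :=
    Int.exists_pos_mul_modEq hq0 (Int.isCoprime_four_mul_prime_sq hq hq2 hqa) (1 + q)
  obtain ⟨d, hd, hdq⟩ :=
    Int.exists_pos_mul_modEq hq0 (Int.isCoprime_four_mul_prime_sq hq hq2 hqb) (1 + q)
  obtain ⟨s, hs⟩ := hcq.dvd
  obtain ⟨t, ht⟩ := hdq.dvd
  refine ⟨c, d, hc, hd, fun x1 x2 x3 x4 hx ↦ ?_⟩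
  have hE : ¬IsSquare ((-(a * (1 - q * t) * (b * (1 - q * s))) : ℤ) : ZMod q) := by
    convert hab using 2
    push_cast [ZMod.natCast_self]
    ring
  obtain ⟨hX, hY, rfl, rfl⟩ := eq_zero_of_descent_eq_zero hab hE
    (X := 2 * b * x2 + x4) (Y := 2 * a * x1 + x3) (Z := x4) (W := x3)
    (by linear_combination (4 * a * b) * hx + (a * x4 ^ 2) * ht + (b * x3 ^ 2) * hs)
  simp only [add_zero, mul_eq_zero, ha.ne', hb.ne, OfNat.ofNat_ne_zero, false_or] at hX hY
  exact ⟨hY, hX, rfl, rfl⟩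
end
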